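/- arXiv:1010.1311 — 4 statements merged into one kernel-verified Lean document; each statement's English description precedes it below -/
import Mathlib

section
/- Let R be a commutative ring, π ∈ R a nonzerodivisor, n ≥ 1, and suppose p/π^{n(p−1)} ∈ R (i.e. π^{n(p−1)} divides p in R), where p is a prime. Then for any flat commutative R-algebra A and any x ∈ A with 1 + π^n x invertible, the element φ_n(x) := ((1 + π^n x)^p − 1)/π^{pn} lies in A, 1 + π^{pn} φ_n(x) is invertible, and φ_n is a group homomorphism from (G_n(A), *_n) to (G_{pn}(A), *_{pn}), where x *_m y := x + y + π^m x y. -/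
/-!
Writing `(1 + a x)^p = 1 + (a x)^p + p·a x·r`, every term of `(1 + a x)^p - 1` is divisible by
`a^p` as soon as `a^{p-1} ∣ p`; with `a = π^n` this defines `φₙ(x)`, uniquely because `π` stays
a nonzerodivisor in the flat algebra `A`. Since `1 + π^{pn} φₙ(x) = (1 + π^n x)^p` and
`1 + π^m (x *ₘ y) = (1 + π^m x)(1 + π^m y)`, the homomorphism property is the multiplicativity of
`u ↦ u^p`.
-/

theorem pow_dvd_one_add_mul_pow_sub_one {A : Type*} [CommRing A] {p : ℕ} (hp : p.Prime) {a : A}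
    (ha : a ^ (p - 1) ∣ (p : A)) (x : A) : a ^ p ∣ (1 + a * x) ^ p - 1 := by
  obtain ⟨r, hr⟩ := exists_add_pow_prime_eq hp (a * x) 1
  obtain ⟨q, rfl⟩ : ∃ q, p = q + 1 := ⟨p - 1, (Nat.succ_pred_eq_of_pos hp.pos).symm⟩
  obtain ⟨t, ht⟩ := ha
  rw [Nat.add_sub_cancel] at ht
  exact ⟨x ^ (q + 1) + t * x * r, by rw [add_comm, hr, ht]; ring⟩

theorem statement5_general (R : Type*) [CommRing R] (p : ℕ) (hp : p.Prime)
    (π : R) (hπ : π ∈ nonZeroDivisors R) (n : ℕ)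
    (hdvd : π ^ (n * (p - 1)) ∣ (p : R))
    (A : Type*) [CommRing A] [Algebra R A] [Module.Flat R A] :
    letI c : A := algebraMap R A π
    -- `φₙ(x)` is a well-defined element of `A`
    (∀ x : A, IsUnit (1 + c ^ n * x) →
        ∃! y : A, c ^ (p * n) * y = (1 + c ^ n * x) ^ p - 1) ∧
    -- `φₙ(x)` lands in `G_{pn}(A)`
    (∀ x y : A, IsUnit (1 + c ^ n * x) →
        c ^ (p * n) * y = (1 + c ^ n * x) ^ p - 1 → IsUnit (1 + c ^ (p * n) * y)) ∧
    -- `φₙ` is a group homomorphism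
    (∀ x₁ x₂ y₁ y₂ y₃ : A, IsUnit (1 + c ^ n * x₁) → IsUnit (1 + c ^ n * x₂) →
        c ^ (p * n) * y₁ = (1 + c ^ n * x₁) ^ p - 1 →
        c ^ (p * n) * y₂ = (1 + c ^ n * x₂) ^ p - 1 →
        c ^ (p * n) * y₃ = (1 + c ^ n * (x₁ + x₂ + c ^ n * x₁ * x₂)) ^ p - 1 →
        y₃ = y₁ + y₂ + c ^ (p * n) * y₁ * y₂) := by
  set c : A := algebraMap R A π
  have cancel : IsSMulRegular A (c ^ (p * n)) :=
    (isSMulRegular_algebraMap_iff A |>.mpr (Module.Flat.isSMulRegular_of_nonZeroDivisors hπ)).pow _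
  have hdvdA : (c ^ n) ^ (p - 1) ∣ (p : A) := by
    simpa [← pow_mul] using map_dvd (algebraMap R A) hdvd
  have one_add_eq {x y : A} (h : c ^ (p * n) * y = (1 + c ^ n * x) ^ p - 1) :
      1 + c ^ (p * n) * y = (1 + c ^ n * x) ^ p := by
    rw [h]; ring
  refine ⟨fun x _ => ?_, fun x y hx hy => ?_, fun x₁ x₂ y₁ y₂ y₃ _ _ e₁ e₂ e₃ => cancel ?_⟩
  · obtain ⟨y, hy⟩ := pow_dvd_one_add_mul_pow_sub_one hp hdvdA x
    rw [← pow_mul, mul_comm n] at hy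
    exact ⟨y, hy.symm, fun z hz => cancel (hz.trans hy)⟩
  · exact one_add_eq hy ▸ hx.pow p
  · have hmul : (1 : A) + c ^ n * (x₁ + x₂ + c ^ n * x₁ * x₂)
        = (1 + c ^ n * x₁) * (1 + c ^ n * x₂) := by ring
    change c ^ (p * n) * y₃ = c ^ (p * n) * (y₁ + y₂ + c ^ (p * n) * y₁ * y₂)
    rw [e₃, hmul, mul_pow, ← one_add_eq e₁, ← one_add_eq e₂]
    ring

/-- **The isogeny `φₙ : 𝒢ₙ → 𝒢ₚₙ` (1.3.1).**  Let `R` be a commutative ring, `π ∈ R` a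
nonzerodivisor, `n ≥ 1`, `p` a prime with `π^{n(p-1)} ∣ p` in `R`, and `A` a flat
commutative `R`-algebra.  For `x ∈ G_n(A)` (i.e. `1 + π^n x` invertible) the element
`φₙ(x) = ((1 + π^n x)^p - 1)/π^{pn}` exists (uniquely) in `A`; moreover
`1 + π^{pn} φₙ(x)` is invertible, and `φₙ` is a group homomorphism
`(G_n(A), *ₙ) → (G_{pn}(A), *ₚₙ)` where `x *ₘ y := x + y + π^m x y`. -/
theorem statement5 (R : Type*) [CommRing R] (p : ℕ) (hp : p.Prime)
    (π : R) (hπ : π ∈ nonZeroDivisors R) (n : ℕ) (hn : 1 ≤ n)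
    (hdvd : π ^ (n * (p - 1)) ∣ (p : R))
    (A : Type*) [CommRing A] [Algebra R A] [Module.Flat R A] :
    letI c : A := algebraMap R A π
    -- `φₙ(x)` is a well-defined element of `A`
    (∀ x : A, IsUnit (1 + c ^ n * x) →
        ∃! y : A, c ^ (p * n) * y = (1 + c ^ n * x) ^ p - 1) ∧
    -- `φₙ(x)` lands in `G_{pn}(A)`
    (∀ x y : A, IsUnit (1 + c ^ n * x) →
        c ^ (p * n) * y = (1 + c ^ n * x) ^ p - 1 → IsUnit (1 + c ^ (p * n) * y)) ∧
    -- `φₙ` is a group homomorphism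
    (∀ x₁ x₂ y₁ y₂ y₃ : A, IsUnit (1 + c ^ n * x₁) → IsUnit (1 + c ^ n * x₂) →
        c ^ (p * n) * y₁ = (1 + c ^ n * x₁) ^ p - 1 →
        c ^ (p * n) * y₂ = (1 + c ^ n * x₂) ^ p - 1 →
        c ^ (p * n) * y₃ = (1 + c ^ n * (x₁ + x₂ + c ^ n * x₁ * x₂)) ^ p - 1 →
        y₃ = y₁ + y₂ + c ^ (p * n) * y₁ * y₂) :=
  statement5_general R p hp π hπ n hdvd A
end

section
/- Let R be a complete discrete valuation ring of mixed characteristic (0, p) containing a primitive p-th root of unity ζ, set λ := ζ − 1, and let A be a flat R-algebra. Then for every x ∈ A, the element ((1 + λ x)^p − 1)/λ^p lies in A and is congruent to x^p − x modulo the maximal ideal of R (i.e. modulo the uniformizer π of R, extended to A). -/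
/-!
Write `λ = ζ - 1`. Since `p ∣ C(p, k)` for `0 < k < p`, one has `(1 + t)^p = 1 + t^p + p t g(t)`
with `g` an integral polynomial satisfying `g(0) = 1`. At `t = λ` the left side is `ζ^p = 1`, so
`p g(λ) = -λ^(p-1)`; as `λ` lies in the maximal ideal, `g(λ)` is a unit and
`p λ = -ε λ^p` with `ε = g(λ)⁻¹ ≡ 1`. At `t = λx` this gives
`(1 + λx)^p - 1 = λ^p (x^p - ε x g(λx))`, and `x^p - ε x g(λx) ≡ x^p - x` because `ε ≡ 1`
and `g(λx) ≡ 1 mod λ`.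
-/

open Finset IsLocalRing

section binomialQuot

variable {S : Type*}

/-- The quotient `((1 + t)^p - 1 - t^p) / (p t)`, with integral coefficients `C(p, k + 1) / p`. -/
def binomialQuot [CommSemiring S] (p : ℕ) (t : S) : S :=
  ∑ k ∈ range (p - 1), ((p.choose (k + 1) / p : ℕ) : S) * t ^ k

theorem one_add_pow_prime_eq [CommSemiring S] {p : ℕ} (hp : p.Prime) (t : S) :
    (1 + t) ^ p = 1 + t ^ p + p * t * binomialQuot p t := by
  rw [add_comm 1 t, add_pow_prime_eq hp t 1, ← Finset.Ico_add_one_left_eq_Ioo,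
    Finset.sum_Ico_eq_sum_range]
  simp [binomialQuot, add_comm, mul_comm]

theorem dvd_binomialQuot_sub_one [CommRing S] {p : ℕ} (hp : 1 < p) (t : S) :
    t ∣ binomialQuot p t - 1 := by
  obtain ⟨n, rfl⟩ : ∃ n, p = n + 2 := ⟨p - 2, by omega⟩
  rw [binomialQuot, show n + 2 - 1 = n + 1 by omega, sum_range_succ']
  simp only [zero_add, Nat.choose_one_right, Nat.div_self (by omega : 0 < n + 2), Nat.cast_one,
    pow_zero, mul_one, add_sub_cancel_right]
  exact dvd_sum fun k _ ↦ dvd_mul_of_dvd_right (dvd_pow_self t k.succ_ne_zero) _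

end binomialQuot

section Kummer

variable {R : Type*} [CommRing R] {p : ℕ} {ζ : R}

theorem IsPrimitiveRoot.natCast_mul_binomialQuot_sub_one [IsDomain R] (hp : p.Prime)
    (hζ : IsPrimitiveRoot ζ p) : (p : R) * binomialQuot p (ζ - 1) = -(ζ - 1) ^ (p - 1) := by
  have hsub : ζ - 1 ≠ 0 := sub_ne_zero.2 (hζ.ne_one hp.one_lt)
  have h := one_add_pow_prime_eq hp (ζ - 1)
  rw [add_sub_cancel, hζ.pow_eq_one, ← mul_pow_sub_one hp.ne_zero] at h
  refine mul_left_cancel₀ hsub ?_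
  linear_combination -h

theorem sub_one_mem_maximalIdeal_of_pow_eq_one [IsLocalRing R] (hp : p.Prime)
    [CharP (ResidueField R) p] (h : ζ ^ p = 1) : ζ - 1 ∈ maximalIdeal R := by
  have : ExpChar (ResidueField R) p := ExpChar.prime hp
  rw [← residue_eq_zero_iff, map_sub, map_one, sub_eq_zero]
  exact frobenius_inj (ResidueField R) p (by rw [map_one, frobenius_def, ← map_pow, h, map_one])

theorem IsPrimitiveRoot.exists_natCast_mul_sub_one_eq [IsDomain R] [IsLocalRing R]
    (hp : p.Prime) (hζ : IsPrimitiveRoot ζ p) (hsub : ζ - 1 ∈ maximalIdeal R) :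
    ∃ ε : R, ε - 1 ∈ maximalIdeal R ∧ (p : R) * (ζ - 1) = -(ε * (ζ - 1) ^ p) := by
  set g := binomialQuot p (ζ - 1)
  have hg : g - 1 ∈ maximalIdeal R :=
    Ideal.mem_of_dvd _ (dvd_binomialQuot_sub_one hp.one_lt _) hsub
  obtain ⟨v, hv⟩ : IsUnit g := isUnit_of_mem_nonunits_one_sub_self g <| by
    rw [← neg_sub, ← mem_maximalIdeal]; exact neg_mem hg
  have hinv : (↑v⁻¹ : R) * g = 1 := hv ▸ v.inv_mul
  refine ⟨↑v⁻¹, ?_, ?_⟩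
  · rw [show (↑v⁻¹ : R) - 1 = -(↑v⁻¹ * (g - 1)) by linear_combination hinv]
    exact neg_mem (Ideal.mul_mem_left _ _ hg)
  · linear_combination (↑v⁻¹ * (ζ - 1)) * hζ.natCast_mul_binomialQuot_sub_one hp
      - (p : R) * (ζ - 1) * hinv - ↑v⁻¹ * mul_pow_sub_one hp.ne_zero (ζ - 1)

end Kummer

section ArtinSchreier

variable {S : Type*} [CommRing S] {p : ℕ} {ℓ ε : S}

theorem pow_mul_sub_mul_binomialQuot (hp : p.Prime) (h : (p : S) * ℓ = -(ε * ℓ ^ p)) (x : S) :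
    ℓ ^ p * (x ^ p - ε * x * binomialQuot p (ℓ * x)) = (1 + ℓ * x) ^ p - 1 := by
  rw [one_add_pow_prime_eq hp, mul_pow]
  linear_combination (-(x * binomialQuot p (ℓ * x))) * h

theorem sub_mul_binomialQuot_sub_mem {I : Ideal S} (hp : 1 < p) (hℓ : ℓ ∈ I)
    (hε : ε - 1 ∈ I) (x : S) :
    x ^ p - ε * x * binomialQuot p (ℓ * x) - (x ^ p - x) ∈ I := by
  obtain ⟨r, hr⟩ := dvd_binomialQuot_sub_one hp (ℓ * x)
  rw [show x ^ p - ε * x * binomialQuot p (ℓ * x) - (x ^ p - x)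
      = -(x * (ε - 1) + ε * x * x * r * ℓ) by linear_combination (-(ε * x)) * hr]
  exact neg_mem (I.add_mem (I.mul_mem_left _ hε) (I.mul_mem_left _ hℓ))

end ArtinSchreier

theorem statement7_general (R : Type*) [CommRing R] [IsDomain R] [IsDiscreteValuationRing R]
    (p : ℕ) (hp : p.Prime)
    (hres : CharP (IsLocalRing.ResidueField R) p)
    (ζ : R) (hζ : IsPrimitiveRoot ζ p)
    (A : Type*) [CommRing A] [Algebra R A] (x : A) :
    ∃ y : A,
      (algebraMap R A (ζ - 1)) ^ p * y = (1 + algebraMap R A (ζ - 1) * x) ^ p - 1 ∧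
      y - (x ^ p - x) ∈ Ideal.map (algebraMap R A) (IsLocalRing.maximalIdeal R) := by
  have hsub : ζ - 1 ∈ maximalIdeal R := sub_one_mem_maximalIdeal_of_pow_eq_one hp hζ.pow_eq_one
  obtain ⟨ε, hε, hpε⟩ := hζ.exists_natCast_mul_sub_one_eq hp hsub
  have hpεA := congrArg (algebraMap R A) hpε
  simp only [map_mul, map_neg, map_pow, map_natCast] at hpεA
  refine ⟨_, pow_mul_sub_mul_binomialQuot hp hpεA x, sub_mul_binomialQuot_sub_mem hp.one_lt
    (Ideal.mem_map_of_mem _ hsub) ?_ x⟩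
  simpa using Ideal.mem_map_of_mem (algebraMap R A) hε

/-- **Degeneration of Kummer to Artin–Schreier (1.3.1).**  Let `R` be a complete
discrete valuation ring of mixed characteristic `(0, p)` containing a primitive `p`-th
root of unity `ζ`, and set `λ := ζ - 1`.  Let `A` be a flat `R`-algebra.  Then for every
`x ∈ A` the element `((1 + λx)^p - 1)/λ^p` lies in `A` and is congruent to `x^p - x`
modulo the maximal ideal of `R` extended to `A`. -/
theorem statement7 (R : Type*) [CommRing R] [IsDomain R] [IsDiscreteValuationRing R]
    [CharZero R]
    (p : ℕ) (hp : p.Prime)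
    (hres : CharP (IsLocalRing.ResidueField R) p)
    [IsAdicComplete (IsLocalRing.maximalIdeal R) R]
    (ζ : R) (hζ : IsPrimitiveRoot ζ p)
    (A : Type*) [CommRing A] [Algebra R A] [Module.Flat R A] (x : A) :
    ∃ y : A,
      (algebraMap R A (ζ - 1)) ^ p * y = (1 + algebraMap R A (ζ - 1) * x) ^ p - 1 ∧
      y - (x ^ p - x) ∈ Ideal.map (algebraMap R A) (IsLocalRing.maximalIdeal R) :=
  statement7_general R p hp hres ζ hζ A x
end

section
/- Let K ⊆ L be an extension of complete discrete valuation rings (O_K ⊆ O_L) where K has characteristic 0, the residue characteristic is p > 0, L/K is Galois of degree p, and the ramification index e(L/K) = 1 (so the residue field extension has degree p). Then the degree δ of the different of O_L/O_K satisfies 0 ≤ δ ≤ v_K(p), where v_K is the normalized valuation of K. -/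
/-!
If a uniformizer `ϖ` of `A` stays a uniformizer of `B`, every element of `L` is `x * u` with
`x ∈ K` and `u ∈ Bˣ`. For `y = x * u` in the trace dual of `B`, the element `Tr(y u⁻¹) = Tr(x) = [L : K] x`
lies in `A`, so `[L : K] y ∈ B`; hence `[L : K] = p` lies in the different, which is a nonzero
ideal of the discrete valuation ring `B` and therefore a power of its maximal ideal.
-/

open Module

section

variable {A B : Type*} [CommRing A] [CommRing B] [Algebra A B]

theorem IsDiscreteValuationRing.exists_eq_algebraMap_mul_unit [IsDomain B]
    [IsDiscreteValuationRing B] {ϖ : A} (hϖ : Irreducible (algebraMap A B ϖ)) (b : B) :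
    ∃ a : A, ∃ u : Bˣ, b = algebraMap A B a * u := by
  rcases eq_or_ne b 0 with rfl | hb
  · exact ⟨0, 1, by simp⟩
  obtain ⟨n, u, rfl⟩ := IsDiscreteValuationRing.eq_unit_mul_pow_irreducible hb hϖ
  exact ⟨ϖ ^ n, u, by rw [map_pow, mul_comm]⟩

variable {K L : Type*} [Field K] [Field L] [Algebra A K] [Algebra B L] [Algebra K L] [Algebra A L]
  [IsScalarTower A K L] [IsScalarTower A B L]

theorem IsFractionRing.exists_eq_algebraMap_mul_unit [IsFractionRing B L]
    (hB : ∀ b : B, ∃ a : A, ∃ u : Bˣ, b = algebraMap A B a * u) (y : L) :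
    ∃ x : K, ∃ u : Bˣ, y = algebraMap K L x * algebraMap B L u := by
  obtain ⟨b, s, -, rfl⟩ := IsFractionRing.div_surjective B y
  obtain ⟨a, u, rfl⟩ := hB b
  obtain ⟨t, v, rfl⟩ := hB s
  refine ⟨algebraMap A K a / algebraMap A K t, u * v⁻¹, ?_⟩
  simp only [Units.val_mul, map_mul, map_units_inv, map_div₀, ← IsScalarTower.algebraMap_apply]
  ring

theorem natCast_finrank_mem_differentIdeal [IsDomain A] [IsIntegrallyClosed A] [IsFractionRing A K]
    [IsDedekindDomain B] [IsTorsionFree A B] [IsFractionRing B L] [IsIntegralClosure B A L]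
    [FiniteDimensional K L] [Algebra.IsSeparable K L]
    (hL : ∀ y : L, ∃ x : K, ∃ u : Bˣ, y = algebraMap K L x * algebraMap B L u) :
    (finrank K L : B) ∈ differentIdeal A B := by
  suffices algebraMap B L (finrank K L) ∈ IsLocalization.coeSubmodule L (differentIdeal A B) by
    obtain ⟨b, hb, he⟩ := (IsLocalization.mem_coeSubmodule _ _).mp this
    rwa [IsFractionRing.injective B L he] at hb
  rw [coeSubmodule_differentIdeal A K, Submodule.mem_div_iff_forall_mul_mem]
  intro y hy
  obtain ⟨x, u, rfl⟩ := hL y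
  obtain ⟨a, ha⟩ := Submodule.mem_traceDual.mp hy (algebraMap B L ↑u⁻¹)
    (Submodule.mem_one.mpr ⟨_, rfl⟩)
  have key : algebraMap A K a = finrank K L • x := by
    rw [ha, Algebra.traceForm_apply, mul_assoc, ← map_mul, Units.mul_inv, map_one, mul_one,
      Algebra.trace_algebraMap]
  refine Submodule.mem_one.mpr ⟨algebraMap A B a * u, ?_⟩
  rw [map_mul, ← IsScalarTower.algebraMap_apply, IsScalarTower.algebraMap_apply A K L, key,
    nsmul_eq_mul, map_mul, map_natCast, map_natCast, mul_assoc]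

end

theorem statement16_general (p : ℕ) (hp : p.Prime)
    (A : Type*) [CommRing A] [IsDomain A] [IsDiscreteValuationRing A] [CharZero A]
    (B : Type*) [CommRing B] [IsDomain B] [IsDiscreteValuationRing B]
    [Algebra A B] [Module.Finite A B] [NoZeroSMulDivisors A B]
    -- ramification index `1`
    (hunram : Ideal.map (algebraMap A B) (IsLocalRing.maximalIdeal A)
        = IsLocalRing.maximalIdeal B)
    [Algebra (FractionRing A) (FractionRing B)]
    [IsScalarTower A (FractionRing A) (FractionRing B)]
    [IsScalarTower A B (FractionRing B)]
    -- `L/K` is Galois of degree `p`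
    [IsGalois (FractionRing A) (FractionRing B)]
    (hdeg : Module.finrank (FractionRing A) (FractionRing B) = p) :
    ∃ δ : ℕ, differentIdeal A B = IsLocalRing.maximalIdeal B ^ δ ∧
      (p : B) ∈ IsLocalRing.maximalIdeal B ^ δ := by
  obtain ⟨ϖ, hϖ⟩ := IsDiscreteValuationRing.exists_irreducible A
  have hϖB : Irreducible (algebraMap A B ϖ) := by
    rw [IsDiscreteValuationRing.irreducible_iff_uniformizer, ← hunram, hϖ.maximalIdeal_eq,
      Ideal.map_span, Set.image_singleton]
  have : FiniteDimensional (FractionRing A) (FractionRing B) := .of_finrank_pos (hdeg ▸ hp.pos)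
  have hmem : (p : B) ∈ differentIdeal A B := hdeg ▸ natCast_finrank_mem_differentIdeal
    (IsFractionRing.exists_eq_algebraMap_mul_unit
      (IsDiscreteValuationRing.exists_eq_algebraMap_mul_unit hϖB))
  have hp0 : (p : B) ≠ 0 := by
    rw [← map_natCast (algebraMap A B)]
    exact (map_ne_zero_iff _ (FaithfulSMul.algebraMap_injective A B)).mpr
      (Nat.cast_ne_zero.mpr hp.ne_zero)
  obtain ⟨δ, hδ⟩ := exists_maximalIdeal_pow_eq_of_principal B
    (IsPrincipalIdealRing.principal _) _ ((Submodule.ne_bot_iff _).mpr ⟨_, hmem, hp0⟩)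
  exact ⟨δ, hδ, hδ ▸ hmem⟩

/-- **Bounds on the different (cf. Proposition 1.3.2).**  Let `O_K ⊆ O_L` be an
extension of complete discrete valuation rings with `char K = 0` and residue
characteristic `p > 0`, such that `L/K` is Galois of degree `p` and the ramification
index is `1` (a uniformizer of `O_K` stays a uniformizer of `O_L`).  Then the degree
`δ` of the different of `O_L/O_K` satisfies `0 ≤ δ ≤ v_K(p)`: the different ideal is
`m_L^δ` for some `δ` with `p ∈ m_L^δ`. -/
theorem statement16 (p : ℕ) (hp : p.Prime)
    (A : Type*) [CommRing A] [IsDomain A] [IsDiscreteValuationRing A] [CharZero A]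
    [IsAdicComplete (IsLocalRing.maximalIdeal A) A]
    (B : Type*) [CommRing B] [IsDomain B] [IsDiscreteValuationRing B]
    [IsAdicComplete (IsLocalRing.maximalIdeal B) B]
    [Algebra A B] [Module.Finite A B] [NoZeroSMulDivisors A B]
    (hres : CharP (IsLocalRing.ResidueField A) p)
    -- ramification index `1`
    (hunram : Ideal.map (algebraMap A B) (IsLocalRing.maximalIdeal A)
        = IsLocalRing.maximalIdeal B)
    [Algebra (FractionRing A) (FractionRing B)]
    [IsScalarTower A (FractionRing A) (FractionRing B)]
    [IsScalarTower A B (FractionRing B)]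
    -- `L/K` is Galois of degree `p`
    [IsGalois (FractionRing A) (FractionRing B)]
    (hdeg : Module.finrank (FractionRing A) (FractionRing B) = p) :
    ∃ δ : ℕ, differentIdeal A B = IsLocalRing.maximalIdeal B ^ δ ∧
      (p : B) ∈ IsLocalRing.maximalIdeal B ^ δ :=
  statement16_general p hp A B hunram hdeg
end

section
/- Let R be a complete discrete valuation ring of mixed characteristic (0,p) with uniformizer π, residue field k, and let n ≥ 1 satisfy n(p−1) < v(ζ−1)(p−1) = v(p), i.e. n < v(λ) where λ = ζ−1 for a primitive p-th root of unity ζ ∈ R. Let A be a flat R-algebra with reduction Ā = A/πA, and let u ∈ A. If Z satisfies Z^p = 1 + π^{pn} u with Z = 1 + π^n X for some X integral over A, then the reduction x of X in the corresponding extension of Ā satisfies x^p = ū, where ū is the reduction of u. In particular, if ū is not a p-th power in Ā, the reduction of the degree-p Kummer extension A[Z]/(Z^p − 1 − π^{pn}u) is the purely inseparable (radicial) extension Ā[x]/(x^p − ū). -/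
/-!
Since `p` is divisible by `(ζ - 1)^(p-1)`, hence by `π^((n+1)(p-1))`, the binomial expansion gives
`(1 + π^n X)^p = 1 + π^(pn) X^p + p π^n X r ≡ 1 + π^(pn) X^p` modulo `π^(pn + p - 1)`.
Comparing with `1 + π^(pn) u` and cancelling `π^(pn)`, which is a nonzerodivisor on the flat
`R`-algebra `B`, shows that `π^(p-1)` divides `X^p - u`.
-/

theorem IsPrimitiveRoot.pow_sub_one_dvd_natCast {R : Type*} [CommRing R] [IsDomain R]
    {ζ a : R} {p : ℕ} (hζ : IsPrimitiveRoot ζ p) (ha : a ∣ ζ - 1) : a ^ (p - 1) ∣ (p : R) := by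
  rcases Nat.eq_zero_or_pos p with rfl | hp
  · simp
  obtain ⟨z, -, hz⟩ := hζ.self_sub_one_pow_dvd_order (Nat.sub_lt hp one_pos)
  rw [hz]
  exact (pow_dvd_pow_of_dvd ha _).mul_left _

theorem pow_dvd_pow_sub_of_one_add_mul_pow_eq {B : Type*} [CommRing B] {p n : ℕ} (hp : p.Prime)
    {t X u : B} (ht : IsLeftRegular t) (hpt : t ^ ((n + 1) * (p - 1)) ∣ (p : B))
    (h : (1 + t ^ n * X) ^ p = 1 + t ^ (p * n) * u) : t ^ (p - 1) ∣ X ^ p - u := by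
  obtain ⟨r, hr⟩ := exists_add_pow_prime_eq hp 1 (t ^ n * X)
  obtain ⟨q, hq⟩ := hpt
  have hexp : (n + 1) * (p - 1) + n = p * n + (p - 1) := by
    have := hp.one_le
    zify [this]
    ring
  have hcancel : t ^ (p * n) * (X ^ p - u) = t ^ (p * n) * -(t ^ (p - 1) * q * X * r) := by
    have hpow : t ^ n * t ^ ((n + 1) * (p - 1)) = t ^ (p * n) * t ^ (p - 1) := by
      rw [← pow_add, ← pow_add, add_comm n, hexp]
    rw [one_pow, mul_pow, ← pow_mul, mul_comm n p, hq, h] at hr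
    generalize (n + 1) * (p - 1) = m at hr hpow
    linear_combination -hr - X * q * r * hpow
  rw [(ht.pow _) hcancel]
  exact dvd_neg.mpr ⟨q * X * r, by ring⟩

theorem statement17_general (R : Type*) [CommRing R] [IsDomain R] [IsDiscreteValuationRing R]
    (p : ℕ) (hp : p.Prime)
    (π : R) (hπ : Irreducible π)
    (ζ : R) (hζ : IsPrimitiveRoot ζ p)
    (n : ℕ) (hlt : π ^ (n + 1) ∣ (ζ - 1))
    (A : Type*) [CommRing A] (u : A)
    (B : Type*) [CommRing B] [Algebra R B] [Algebra A B]
    [Module.Flat R B]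
    (X : B)
    (hZ : (1 + (algebraMap R B π) ^ n * X) ^ p
        = 1 + (algebraMap R B π) ^ (p * n) * algebraMap A B u) :
    X ^ p - algebraMap A B u ∈ Ideal.map (algebraMap R B) (IsLocalRing.maximalIdeal R) := by
  have hpR : π ^ ((n + 1) * (p - 1)) ∣ (p : R) := pow_mul π _ _ ▸ hζ.pow_sub_one_dvd_natCast hlt
  have hpB : (algebraMap R B π) ^ ((n + 1) * (p - 1)) ∣ (p : B) := by
    simpa only [map_pow, map_natCast] using map_dvd (algebraMap R B) hpR
  have hreg : IsLeftRegular (algebraMap R B π) :=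
    (IsSMulRegular.of_flat (IsRegular.of_ne_zero hπ.ne_zero).left).isLeftRegular
  obtain ⟨w, hw⟩ := (dvd_pow_self _ (Nat.sub_ne_zero_of_lt hp.one_lt)).trans
    (pow_dvd_pow_sub_of_one_add_mul_pow_eq hp hreg hpB hZ)
  rw [hw]
  exact Ideal.mul_mem_right _ _ (Ideal.mem_map_of_mem _ hπ.not_isUnit)

/-- **Degeneration of a `μ_p`-Kummer torsor to an `α_p`-torsor (cf. 1.3.1).**
Let `R` be a complete discrete valuation ring of mixed characteristic `(0, p)` with
uniformizer `π`, containing a primitive `p`-th root of unity `ζ`, with `λ := ζ - 1`,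
and let `1 ≤ n` satisfy `n < v(λ)` (i.e. `π^{n+1} ∣ λ`).  Let `A` be a flat `R`-algebra
and `u ∈ A`.  If, in an extension `B` of `A` (flat over `R`), an element `X` integral
over `A` satisfies `Z^p = 1 + π^{pn} u` with `Z = 1 + π^n X`, then the reduction `x` of
`X` modulo `π` satisfies `x^p = ū`: that is, `X^p - u` lies in the extension to `B` of
the maximal ideal of `R`. -/
theorem statement17 (R : Type*) [CommRing R] [IsDomain R] [IsDiscreteValuationRing R]
    [CharZero R]
    (p : ℕ) (hp : p.Prime)
    (hres : CharP (IsLocalRing.ResidueField R) p)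
    [IsAdicComplete (IsLocalRing.maximalIdeal R) R]
    (π : R) (hπ : Irreducible π)
    (ζ : R) (hζ : IsPrimitiveRoot ζ p)
    (n : ℕ) (hn : 1 ≤ n) (hlt : π ^ (n + 1) ∣ (ζ - 1))
    (A : Type*) [CommRing A] [Algebra R A] [Module.Flat R A] (u : A)
    (B : Type*) [CommRing B] [Algebra R B] [Algebra A B] [IsScalarTower R A B]
    [Module.Flat R B]
    (X : B) (hX : IsIntegral A X)
    (hZ : (1 + (algebraMap R B π) ^ n * X) ^ p
        = 1 + (algebraMap R B π) ^ (p * n) * algebraMap A B u) :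
    X ^ p - algebraMap A B u ∈ Ideal.map (algebraMap R B) (IsLocalRing.maximalIdeal R) :=
  statement17_general R p hp π hπ ζ hζ n hlt A u B X hZ
end
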